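/- Let L be a finite graded lattice of rank n ≥ 1 whose proper part has nonzero (n-2)-nd reduced homology over k. Then L has at least one coatom c such that the order complex of the open interval (0̂, c) has nonzero (n-3)-rd reduced homology over k (where for n = 1 the coatom 0̂ itself counts). -/

import Mathlib

set_option maxSynthPendingDepth 2

open Finset

variable {α : Type*}

/-- A `j`-vertex simplex of the order complex of `s ⊆ α`: a strictly increasing
`j`-tuple of elements of `s` (for `j = 0` this is the unique empty simplex). -/
def OrderedSimplex [Preorder α] (s : Set α) (j : ℕ) : Type _ :=
  {f : Fin j → α // StrictMono f ∧ ∀ i, f i ∈ s}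

/-- The module of simplicial chains with `j` vertices (i.e. of degree `j - 1`)
of the order complex of `s`, with coefficients in `K`.  Since degree `j = 0`
corresponds to the empty simplex, this is the *augmented* chain complex. -/
abbrev SimpChains (K : Type*) [CommRing K] [Preorder α] (s : Set α) (j : ℕ) :=
  OrderedSimplex s j →₀ K

/-- The `i`-th face of a simplex (delete the `i`-th vertex). -/
def OrderedSimplex.face [Preorder α] {s : Set α} {j : ℕ}
    (σ : OrderedSimplex s (j + 1)) (i : Fin (j + 1)) : OrderedSimplex s j :=
  ⟨σ.1 ∘ Fin.succAbove i, σ.2.1.comp (Fin.strictMono_succAbove i), fun _ => σ.2.2 _⟩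

/-- The simplicial boundary map (for `j = 0` it is the augmentation). -/
noncomputable def simpBoundary (K : Type*) [CommRing K] [Preorder α] (s : Set α) (j : ℕ) :
    SimpChains K s (j + 1) →ₗ[K] SimpChains K s j :=
  Finsupp.lsum K fun σ => ∑ i : Fin (j + 1), ((-1 : K) ^ (i : ℕ)) • Finsupp.lsingle (σ.face i)

/-- Cycles with `j` vertices (for `j = 0` every chain is a cycle). -/
noncomputable def simpCycles (K : Type*) [CommRing K] [Preorder α] (s : Set α) :
    (j : ℕ) → Submodule K (SimpChains K s j)
  | 0 => ⊤
  | (i + 1) => LinearMap.ker (simpBoundary K s i)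

/-- Boundaries with `j` vertices. -/
noncomputable def simpBoundaries (K : Type*) [CommRing K] [Preorder α] (s : Set α) (j : ℕ) :
    Submodule K (SimpChains K s j) :=
  LinearMap.range (simpBoundary K s j)

/-- `ReducedHomology K s j` is the reduced simplicial homology group
`H̃_{j-1}(Δ(s); K)` of the order complex of `s` (the index `j` counts vertices,
so `j = 0` gives `H̃₋₁` and `j = n - 1` gives `H̃_{n-2}`). -/
noncomputable def ReducedHomology (K : Type*) [CommRing K] [Preorder α] (s : Set α) (j : ℕ) :=
  ↥(simpCycles K s j) ⧸ (simpBoundaries K s j).comap (simpCycles K s j).subtype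

noncomputable instance (K : Type*) [CommRing K] [Preorder α] (s : Set α) (j : ℕ) :
    AddCommGroup (ReducedHomology K s j) := by unfold ReducedHomology; infer_instance

noncomputable instance (K : Type*) [CommRing K] [Preorder α] (s : Set α) (j : ℕ) :
    Module K (ReducedHomology K s j) := by unfold ReducedHomology; infer_instance

/-- The proper part `L ∖ {⊥, ⊤}` of a bounded poset. -/
def properPart (α : Type*) [Preorder α] [BoundedOrder α] : Set α :=
  {x | x ≠ ⊥ ∧ x ≠ ⊤}

/-- The flag `f`-vector entry `f_P(S)`: the number of chains in the proper part
of `P` whose set of ranks is exactly `S`. -/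
noncomputable def flagf (α : Type*) [Preorder α] [BoundedOrder α] [GradeMinOrder ℕ α]
    (S : Finset ℕ) : ℕ :=
  Nat.card {C : Finset α // IsChain (· ≤ ·) (C : Set α) ∧ (↑C ⊆ properPart α) ∧
    C.image (grade ℕ) = S}

/-- The multinomial coefficient `α_n(S) = n! / (s₁!·(s₂-s₁)!⋯(n-s_l)!)`
for `S = {s₁ < s₂ < ⋯ < s_l} ⊆ [n-1]`; it equals `f_{B_n}(S)`. -/
def alphaMulti (n : ℕ) (S : Finset ℕ) : ℕ :=
  n.factorial /
    ((S.sort (· ≤ ·) ++ [n]).zipWith (fun b a => (b - a).factorial)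
      (0 :: S.sort (· ≤ ·))).prod

/-- An element `x` of a graded bounded poset is *good* if `x = ⊥` or the order
complex of the open interval `(⊥, x)` has nontrivial top reduced homology
`H̃_{ρ(x)-2}` over `K`. -/
def IsGoodElement (K : Type*) [CommRing K] [Preorder α] [OrderBot α] [GradeMinOrder ℕ α]
    (x : α) : Prop :=
  x = ⊥ ∨ Nontrivial (ReducedHomology K (Set.Ioo (⊥ : α) x) (grade ℕ x - 1))

/-!
Take a nonzero cycle `z` of top dimension `n - 2` in the proper part and a simplex `ρ` in its
support. The top vertex `c` of `ρ` has rank `n - 1`, so it is maximal in the proper part, and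
therefore deleting `c` from the simplices ending at `c` commutes with the boundary: the
coefficients of `z` on these simplices form a cycle of `(⊥, c)`, nonzero at `ρ` minus `c`.
Since `(⊥, c)` has no simplices of dimension `n - 2`, this cycle is not a boundary.
For `n ≤ 1` the coatom `⊥` does the job.
-/

section Link

variable {α : Type*} [Preorder α] {s : Set α} {c : α} {j : ℕ}

lemma Fin.strictMono_snoc_iff {n : ℕ} {f : Fin n → α} {x : α} :
    StrictMono (Fin.snoc f x : Fin (n + 1) → α) ↔ StrictMono f ∧ ∀ i, f i < x := by
  rw [← Fin.insertNth_last', Fin.strictMono_insertNth_iff]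
  simp [Fin.castSucc_lt_last]

namespace OrderedSimplex

def snoc (hc : c ∈ s) (σ : OrderedSimplex (s ∩ Set.Iio c) j) : OrderedSimplex s (j + 1) :=
  ⟨Fin.snoc σ.1 c, Fin.strictMono_snoc_iff.2 ⟨σ.2.1, fun i => (σ.2.2 i).2⟩, fun k => by
    induction k using Fin.lastCases with
    | last => simpa using hc
    | cast i => simpa using (σ.2.2 i).1⟩

@[simp]
lemma snoc_val (hc : c ∈ s) (σ : OrderedSimplex (s ∩ Set.Iio c) j) :
    (snoc hc σ).1 = Fin.snoc σ.1 c :=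
  rfl

lemma snoc_injective (hc : c ∈ s) : Function.Injective (snoc hc (j := j)) := fun σ τ h =>
  Subtype.ext (by simpa using congrArg (fun ρ : OrderedSimplex s (j + 1) => Fin.init ρ.1) h)

lemma exists_snoc_eq (hc : c ∈ s) (ρ : OrderedSimplex s (j + 1)) (h : ρ.1 (Fin.last j) = c) :
    ∃ σ, snoc hc σ = ρ :=
  ⟨⟨Fin.init ρ.1, ρ.2.1.comp Fin.strictMono_castSucc, fun i =>
      ⟨ρ.2.2 _, h ▸ ρ.2.1 (Fin.castSucc_lt_last i)⟩⟩,
    Subtype.ext <| by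
      show Fin.snoc (Fin.init ρ.1) c = ρ.1
      rw [← h, Fin.snoc_init_self]⟩

@[simp]
lemma face_val (σ : OrderedSimplex s (j + 1)) (i : Fin (j + 1)) :
    (σ.face i).1 = σ.1 ∘ i.succAbove :=
  rfl

lemma snoc_face_castSucc (hc : c ∈ s) (σ : OrderedSimplex (s ∩ Set.Iio c) (j + 1))
    (i : Fin (j + 1)) : (snoc hc σ).face i.castSucc = snoc hc (σ.face i) := by
  apply Subtype.ext
  funext k
  induction k using Fin.lastCases with
  | last => simp [Fin.succAbove_of_le_castSucc _ _ (Fin.castSucc_le_castSucc_iff.2 (Fin.le_last i))]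
  | cast k => simp

lemma face_last_val_last (σ : OrderedSimplex s (j + 2)) :
    (σ.face (Fin.last (j + 1))).1 (Fin.last j) = σ.1 (Fin.last j).castSucc := by
  simp

lemma face_val_last_of_ne (σ : OrderedSimplex s (j + 2)) {i : Fin (j + 2)}
    (h : i ≠ Fin.last (j + 1)) : (σ.face i).1 (Fin.last j) = σ.1 (Fin.last (j + 1)) := by
  simp [Fin.succAbove_ne_last_last h]

end OrderedSimplex

open OrderedSimplex

variable (K : Type*) [CommRing K]

lemma simpBoundary_single (σ : OrderedSimplex s (j + 1)) (a : K) :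
    simpBoundary K s j (Finsupp.single σ a) =
      ∑ i : Fin (j + 1), (-1 : K) ^ (i : ℕ) • Finsupp.single (σ.face i) a := by
  simp [simpBoundary]

noncomputable def stripLast (hc : c ∈ s) (j : ℕ) :
    SimpChains K s (j + 1) →ₗ[K] SimpChains K (s ∩ Set.Iio c) j :=
  Finsupp.lcomapDomain (snoc hc) (snoc_injective hc)

lemma stripLast_apply (hc : c ∈ s) (z : SimpChains K s (j + 1))
    (σ : OrderedSimplex (s ∩ Set.Iio c) j) : stripLast K hc j z σ = z (snoc hc σ) :=
  rfl

lemma stripLast_single_snoc (hc : c ∈ s) (σ : OrderedSimplex (s ∩ Set.Iio c) j) (a : K) :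
    stripLast K hc j (Finsupp.single (snoc hc σ) a) = Finsupp.single σ a :=
  Finsupp.comapDomain_single _ _ _ _

lemma stripLast_single_of_ne (hc : c ∈ s) (ρ : OrderedSimplex s (j + 1))
    (h : ρ.1 (Fin.last j) ≠ c) (a : K) : stripLast K hc j (Finsupp.single ρ a) = 0 :=
  Finsupp.comapDomain_single_of_not_mem_range (by rintro ⟨σ, rfl⟩; simp at h) a _

lemma stripLast_boundary_single_snoc (hc : c ∈ s) (σ : OrderedSimplex (s ∩ Set.Iio c) (j + 1))
    (a : K) :
    stripLast K hc j (simpBoundary K s (j + 1) (Finsupp.single (snoc hc σ) a)) =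
      simpBoundary K (s ∩ Set.Iio c) j (Finsupp.single σ a) := by
  -- the last face deletes `c` itself, so it does not end at `c`
  have hlast : ((snoc hc σ).face (Fin.last (j + 1))).1 (Fin.last j) ≠ c := by
    simpa [face_last_val_last] using (σ.2.2 (Fin.last j)).2.ne
  rw [simpBoundary_single, simpBoundary_single, Fin.sum_univ_castSucc, map_add, map_smul,
    stripLast_single_of_ne K hc _ hlast, smul_zero, add_zero, map_sum]
  refine Finset.sum_congr rfl fun i _ => ?_
  rw [map_smul, snoc_face_castSucc, stripLast_single_snoc, Fin.val_castSucc]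

lemma stripLast_boundary_single_of_ne (hc : c ∈ s) (hmax : ∀ x ∈ s, ¬c < x)
    (ρ : OrderedSimplex s (j + 2)) (h : ρ.1 (Fin.last (j + 1)) ≠ c) (a : K) :
    stripLast K hc j (simpBoundary K s (j + 1) (Finsupp.single ρ a)) = 0 := by
  rw [simpBoundary_single, map_sum]
  refine Finset.sum_eq_zero fun i _ => ?_
  rw [map_smul, stripLast_single_of_ne K hc _ ?_ a, smul_zero]
  obtain rfl | hi := eq_or_ne i (Fin.last (j + 1))
  · rw [face_last_val_last]
    rintro rfl
    exact hmax _ (ρ.2.2 _) (ρ.2.1 (Fin.castSucc_lt_last _))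
  · rwa [face_val_last_of_ne ρ hi]

lemma simpBoundary_comp_stripLast (hc : c ∈ s) (hmax : ∀ x ∈ s, ¬c < x) (j : ℕ) :
    simpBoundary K (s ∩ Set.Iio c) j ∘ₗ stripLast K hc (j + 1) =
      stripLast K hc j ∘ₗ simpBoundary K s (j + 1) := by
  refine Finsupp.lhom_ext fun ρ a => ?_
  simp only [LinearMap.comp_apply]
  by_cases h : ρ.1 (Fin.last (j + 1)) = c
  · obtain ⟨σ, rfl⟩ := exists_snoc_eq hc ρ h
    rw [stripLast_single_snoc, stripLast_boundary_single_snoc]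
  · rw [stripLast_single_of_ne K hc ρ h, map_zero, stripLast_boundary_single_of_ne K hc hmax ρ h]

lemma stripLast_mem_simpCycles (hc : c ∈ s) (hmax : ∀ x ∈ s, ¬c < x)
    {z : SimpChains K s (j + 1)} (hz : z ∈ simpCycles K s (j + 1)) :
    stripLast K hc j z ∈ simpCycles K (s ∩ Set.Iio c) j := by
  cases j with
  | zero => trivial
  | succ j =>
    change simpBoundary K _ j (stripLast K hc (j + 1) z) = 0
    rw [← LinearMap.comp_apply, simpBoundary_comp_stripLast K hc hmax, LinearMap.comp_apply,
      LinearMap.mem_ker.1 hz, map_zero]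

end Link

section Homology

variable {α : Type*} [Preorder α] (K : Type*) [CommRing K] {s : Set α} {j : ℕ}

lemma exists_mem_simpCycles_ne_zero [Nontrivial (ReducedHomology K s j)] :
    ∃ z ∈ simpCycles K s j, z ≠ 0 := by
  have : Nontrivial (simpCycles K s j) :=
    Function.Surjective.nontrivial (β := ReducedHomology K s j)
      (Submodule.Quotient.mk_surjective _)
  obtain ⟨⟨z, hz⟩, hz0⟩ := exists_ne (0 : simpCycles K s j)
  exact ⟨z, hz, fun h => hz0 (Subtype.ext h)⟩

lemma simpBoundaries_eq_bot [IsEmpty (OrderedSimplex s (j + 1))] :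
    simpBoundaries K s j = ⊥ := by
  rw [simpBoundaries, LinearMap.range_eq_bot, Subsingleton.elim (simpBoundary K s j) 0]

lemma nontrivial_reducedHomology_of_not_mem {z : SimpChains K s j} (hz : z ∈ simpCycles K s j)
    (hzb : z ∉ simpBoundaries K s j) : Nontrivial (ReducedHomology K s j) :=
  nontrivial_of_ne (Submodule.Quotient.mk ⟨z, hz⟩ : ReducedHomology K s j) 0
    fun h => hzb ((Submodule.Quotient.mk_eq_zero
      ((simpBoundaries K s j).comap (simpCycles K s j).subtype)).1 h)

end Homology

section Graded

variable {α : Type*} {j : ℕ}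

lemma add_le_grade_of_strictMono [Preorder α] [GradeOrder ℕ α] {f : Fin (j + 1) → α}
    (hf : StrictMono f) (i : Fin (j + 1)) : grade ℕ (f 0) + i ≤ grade ℕ (f i) := by
  induction i using Fin.induction with
  | zero => simp
  | succ i ih =>
    have := grade_strictMono (𝕆 := ℕ) (hf (Fin.castSucc_lt_succ (i := i)))
    simp only [Fin.val_succ, Fin.val_castSucc] at ih ⊢
    omega

variable [PartialOrder α] [BoundedOrder α]

lemma properPart_inter_Iio (c : α) : properPart α ∩ Set.Iio c = Set.Ioo ⊥ c := by
  ext x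
  simp only [properPart, Set.mem_inter_iff, Set.mem_ofPred_eq, Set.mem_Iio, Set.mem_Ioo,
    bot_lt_iff_ne_bot]
  exact ⟨fun h => ⟨h.1.1, h.2⟩, fun h => ⟨⟨h.1, (h.2.trans_le le_top).ne⟩, h.2⟩⟩

variable [GradeMinOrder ℕ α]

lemma OrderedSimplex.grade_last_ge {s : Set α} (hs : s ⊆ properPart α)
    (σ : OrderedSimplex s (j + 1)) : j + 1 ≤ grade ℕ (σ.1 (Fin.last j)) := by
  have h0 : grade ℕ (⊥ : α) < grade ℕ (σ.1 0) :=
    grade_strictMono (bot_lt_iff_ne_bot.2 (hs (σ.2.2 0)).1)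
  have := add_le_grade_of_strictMono σ.2.1 (Fin.last j)
  simp only [grade_bot, Fin.val_last] at h0 this
  omega

lemma isEmpty_orderedSimplex_properPart_inter_Iio {c : α} (hc : grade ℕ c ≤ j + 1) :
    IsEmpty (OrderedSimplex (properPart α ∩ Set.Iio c) (j + 1)) := by
  refine ⟨fun τ => ?_⟩
  have := τ.grade_last_ge Set.inter_subset_left
  have := grade_strictMono (𝕆 := ℕ) (τ.2.2 (Fin.last j)).2
  omega

end Graded

open OrderedSimplex

theorem exists_good_coatom_general
    (n : ℕ)
    (α : Type*) [Lattice α] [BoundedOrder α] [GradeMinOrder ℕ α]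
    (hrank : grade ℕ (⊤ : α) = n)
    (K : Type*) [Field K]
    (hH : Nontrivial (ReducedHomology K (properPart α) (n - 1))) :
    ∃ c : α, grade ℕ c = n - 1 ∧
      (c = ⊥ ∨ Nontrivial (ReducedHomology K (Set.Ioo (⊥ : α) c) (n - 2))) := by
  obtain hn | ⟨m, rfl⟩ : n ≤ 1 ∨ ∃ m, n = m + 2 := by
    rcases n with _ | _ | m <;> simp
  · exact ⟨⊥, by simp; omega, Or.inl rfl⟩
  have : Nontrivial (ReducedHomology K (properPart α) (m + 1)) := hH
  obtain ⟨z, hz, hz0⟩ := exists_mem_simpCycles_ne_zero K (s := properPart α) (j := m + 1)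
  obtain ⟨ρ, hρ⟩ := Finsupp.ne_iff.1 hz0
  obtain ⟨c, hcρ⟩ : ∃ c, ρ.1 (Fin.last m) = c := ⟨_, rfl⟩
  have hc : c ∈ properPart α := hcρ ▸ ρ.2.2 _
  have hgc : grade ℕ c = m + 1 := by
    have := hcρ ▸ ρ.grade_last_ge subset_rfl
    have := grade_strictMono (𝕆 := ℕ) hc.2.lt_top
    omega
  have hmax : ∀ x ∈ properPart α, ¬c < x := fun x hx hcx => by
    have := grade_strictMono (𝕆 := ℕ) hcx
    have := grade_strictMono (𝕆 := ℕ) hx.2.lt_top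
    omega
  obtain ⟨σ, rfl⟩ := exists_snoc_eq hc ρ hcρ
  refine ⟨c, hgc, Or.inr ?_⟩
  rw [Nat.add_sub_cancel, ← properPart_inter_Iio]
  have := isEmpty_orderedSimplex_properPart_inter_Iio (j := m) hgc.le
  refine nontrivial_reducedHomology_of_not_mem K (stripLast_mem_simpCycles K hc hmax hz) ?_
  rw [simpBoundaries_eq_bot, Submodule.mem_bot]
  exact fun h => hρ (by rw [← stripLast_apply K hc, h]; rfl)

/-- **Step 1.**  A finite graded lattice `L` of rank `n ≥ 1` whose proper part has
nonzero reduced homology `H̃_{n-2}` over `K` has at least one good coatom: an element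
`c` of rank `n - 1` with `H̃_{n-3}(Δ(⊥,c); K) ≠ 0` (for `n = 1` the coatom `⊥` itself
counts). -/
theorem exists_good_coatom
    (n : ℕ) (hn : 1 ≤ n)
    (α : Type*) [Lattice α] [BoundedOrder α] [Fintype α] [GradeMinOrder ℕ α]
    (hrank : grade ℕ (⊤ : α) = n)
    (K : Type*) [Field K]
    (hH : Nontrivial (ReducedHomology K (properPart α) (n - 1))) :
    ∃ c : α, grade ℕ c = n - 1 ∧
      (c = ⊥ ∨ Nontrivial (ReducedHomology K (Set.Ioo (⊥ : α) c) (n - 2))) :=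
  exists_good_coatom_general n α hrank K hH
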